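/- arXiv:1303.0501 — 2 statements merged into one kernel-verified Lean document; each statement's English description precedes it below -/
import Mathlib

section
/- Let 2 ≤ β < 3 and let f ∈ A with f'(z) ≠ 0 for all z ∈ U and f(z) ≠ 0 for all z ∈ U \ {0}. If Re(1 + z f''(z)/f'(z)) < (β+1)/(2(β−1)) for all z ∈ U, then z f'(z)/f(z) ≺ β(1−z)/(β−z), and |z f'(z)/f(z) − β/(β+1)| < β/(β+1) for all z ∈ U; in particular f ∈ S* and the function F(z) = ∫₀^z f(t)/t dt belongs to K. -/
open Complex Metric Set Filter Topology

/-- Derivative of `t ↦ normSq (u t)` for a real-to-complex function. -/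
lemma normSq_hasDerivAt {u : ℝ → ℂ} {u' : ℂ} {t : ℝ} (h : HasDerivAt u u' t) :
    HasDerivAt (fun s => Complex.normSq (u s)) (2 * ((starRingEnd ℂ) (u t) * u').re) t := by
  have hconj : HasDerivAt (fun s => (starRingEnd ℂ) (u s)) ((starRingEnd ℂ) u') t := by
    exact (Complex.conjCLE.hasFDerivAt.comp_hasDerivAt t h)
  have hmul : HasDerivAt (fun s => u s * (starRingEnd ℂ) (u s))
      (u' * (starRingEnd ℂ) (u t) + u t * (starRingEnd ℂ) u') t := h.mul hconj
  have hre : HasDerivAt (fun s => (u s * (starRingEnd ℂ) (u s)).re)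
      ((u' * (starRingEnd ℂ) (u t) + u t * (starRingEnd ℂ) u').re) t :=
    (Complex.reCLM.hasFDerivAt.comp_hasDerivAt t hmul)
  have heq : (fun s => (u s * (starRingEnd ℂ) (u s)).re) = fun s => Complex.normSq (u s) := by
    funext s; rw [Complex.mul_conj]; simp
  have hval : (u' * (starRingEnd ℂ) (u t) + u t * (starRingEnd ℂ) u').re
      = 2 * ((starRingEnd ℂ) (u t) * u').re := by
    simp [Complex.add_re, Complex.mul_re, Complex.conj_re, Complex.conj_im]; ring
  rw [heq, hval] at hre; exact hre

/-- **Jack's lemma**. -/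
lemma jack_lemma {w : ℂ → ℂ} {r₀ : ℝ} {z₀ : ℂ} (h0 : 0 < r₀)
    (hd : DifferentiableOn ℂ w (ball (0:ℂ) r₀)) (hdz : DifferentiableAt ℂ w z₀)
    (hw0 : w 0 = 0) (hz₀ : ‖z₀‖ = r₀)
    (hlt : ∀ z : ℂ, ‖z‖ < r₀ → ‖w z‖ < 1)
    (hb : ∀ z : ℂ, ‖z‖ = r₀ → ‖w z‖ ≤ 1) (hw1 : ‖w z₀‖ = 1) :
    ∃ k : ℝ, 1 ≤ k ∧ z₀ * deriv w z₀ = (k : ℂ) * w z₀ := by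
  set W := w z₀ with hW
  set D := deriv w z₀ with hD
  have hDer : HasDerivAt w D z₀ := hdz.hasDerivAt
  have hWnormSq : Complex.normSq W = 1 := by
    rw [← Complex.sq_norm]; rw [hw1]; norm_num
  -- Schwarz: ‖w z‖ ≤ ‖z‖ / r₀ on the ball
  have hmaps : MapsTo w (ball (0:ℂ) r₀) (ball (w 0) 1) := by
    intro z hz
    rw [hw0, mem_ball_zero_iff]
    exact hlt z (by simpa [mem_ball_zero_iff] using hz)
  have schwarz : ∀ z : ℂ, ‖z‖ < r₀ → ‖w z‖ ≤ r₀⁻¹ * ‖z‖ := by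
    intro z hz
    have := Complex.dist_le_div_mul_dist_of_mapsTo_ball hd (hmaps.mono_right ball_subset_closedBall)
      (by simpa [mem_ball_zero_iff] using hz)
    simpa [hw0, dist_zero_right, div_mul_eq_mul_div, mul_comm] using this
  -- radial function
  have hray : ∀ t : ℝ, HasDerivAt (fun s : ℝ => w ((s : ℂ) * z₀)) ((z₀ : ℂ) * deriv w ((t:ℂ) * z₀)) t → True := fun _ _ => trivial
  -- the path t ↦ t • z₀
  have hc : ∀ t : ℝ, HasDerivAt (fun s : ℝ => (s : ℂ) * z₀) z₀ t := by
    intro t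
    simpa using (Complex.ofRealCLM.hasDerivAt (x := t)).mul_const z₀
  have hu : HasDerivAt (fun s : ℝ => w ((s : ℂ) * z₀)) (z₀ • D) 1 := by
    have := HasDerivAt.scomp_of_eq (g₁ := w) (h := fun s : ℝ => (s : ℂ) * z₀)
      (y := z₀) (x := 1) hDer (hc 1) (by simp)
    simpa [Function.comp_def] using this
  have hφ : HasDerivAt (fun s : ℝ => Complex.normSq (w ((s : ℂ) * z₀)))
      (2 * ((starRingEnd ℂ) W * (z₀ • D)).re) 1 := by
    have := normSq_hasDerivAt hu
    simpa [hW] using this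
  -- χ t = normSq(w(t z₀)) - t^2  has χ ≤ 0 on (0,1), χ 1 = 0
  have hφle : ∀ t : ℝ, 0 < t → t < 1 → Complex.normSq (w ((t : ℂ) * z₀)) ≤ t ^ 2 := by
    intro t ht0 ht1
    have hnz : ‖(t : ℂ) * z₀‖ = t * r₀ := by
      simp [norm_mul, Complex.norm_real, abs_of_pos ht0, hz₀]
    have hlt' : ‖(t : ℂ) * z₀‖ < r₀ := by
      rw [hnz]; nlinarith
    have := schwarz _ hlt'
    rw [hnz] at this
    have h2 : ‖w ((t:ℂ) * z₀)‖ ≤ t := by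
      have : r₀⁻¹ * (t * r₀) = t := by field_simp
      linarith [this ▸ ‹‖w ((t:ℂ) * z₀)‖ ≤ r₀⁻¹ * (t * r₀)›]
    rw [← Complex.sq_norm]
    have : (‖w ((t:ℂ)*z₀)‖)^2 ≤ t^2 := by
      apply sq_le_sq' _ h2
      have := norm_nonneg (w ((t:ℂ)*z₀))
      linarith
    simpa using this
  have hχ : HasDerivAt (fun s : ℝ => Complex.normSq (w ((s : ℂ) * z₀)) - s^2)
      (2 * ((starRingEnd ℂ) W * (z₀ • D)).re - 2) 1 := by
    have h2 : HasDerivAt (fun s : ℝ => s^2) (2 : ℝ) 1 := by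
      simpa using (hasDerivAt_pow 2 (1:ℝ))
    exact hφ.sub h2
  have hkey1 : (1:ℝ) ≤ ((starRingEnd ℂ) W * (z₀ • D)).re := by
    have hslope := hasDerivAt_iff_tendsto_slope.1 hχ
    have hslope' : Tendsto (slope (fun s : ℝ => Complex.normSq (w ((s : ℂ) * z₀)) - s^2) 1)
        (𝓝[<] 1) (𝓝 (2 * ((starRingEnd ℂ) W * (z₀ • D)).re - 2)) :=
      hslope.mono_left (nhdsWithin_mono 1 (fun x hx => ne_of_lt hx))
    have hnonneg : ∀ᶠ t in 𝓝[<] (1:ℝ),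
        0 ≤ slope (fun s : ℝ => Complex.normSq (w ((s : ℂ) * z₀)) - s^2) 1 t := by
      filter_upwards [Ioo_mem_nhdsLT_of_mem (by norm_num : (1:ℝ) ∈ Set.Ioc (0:ℝ) 1)] with t ht
      have hnum : Complex.normSq (w ((t : ℂ) * z₀)) - t^2 ≤ 0 := by
        have := hφle t ht.1 ht.2; linarith
      have hval1 : Complex.normSq (w ((1 : ℂ) * z₀)) - (1:ℝ)^2 = 0 := by
        simp [← hW, hWnormSq]
      rw [slope_def_field]
      have h1 : ((fun s : ℝ => Complex.normSq (w ((s : ℂ) * z₀)) - s^2) t -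
          (fun s : ℝ => Complex.normSq (w ((s : ℂ) * z₀)) - s^2) 1) ≤ 0 := by
        simp only []
        rw [show ((1:ℝ):ℂ) = (1:ℂ) by norm_num] at *
        rw [hval1]; linarith
      have h2 : t - 1 < 0 := by linarith [ht.2]
      exact div_nonneg_iff.2 (Or.inr ⟨h1, le_of_lt h2⟩)
    have := ge_of_tendsto hslope' hnonneg
    linarith
  -- angular
  have he : HasDerivAt (fun θ : ℝ => z₀ * Complex.exp ((θ : ℂ) * Complex.I)) (z₀ * Complex.I) 0 := by
    have := (((Complex.ofRealCLM.hasDerivAt (x := (0:ℝ))).mul_const Complex.I).cexp.const_mul z₀)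
    simpa using this
  have hu2 : HasDerivAt (fun θ : ℝ => w (z₀ * Complex.exp ((θ : ℂ) * Complex.I)))
      ((z₀ * Complex.I) • D) 0 := by
    have := HasDerivAt.scomp_of_eq (g₁ := w)
      (h := fun θ : ℝ => z₀ * Complex.exp ((θ : ℂ) * Complex.I))
      (y := z₀) (x := 0) hDer he (by simp)
    simpa [Function.comp_def] using this
  have hψ : HasDerivAt (fun θ : ℝ => Complex.normSq (w (z₀ * Complex.exp ((θ : ℂ) * Complex.I))))
      (2 * ((starRingEnd ℂ) W * ((z₀ * Complex.I) • D)).re) 0 := by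
    have := normSq_hasDerivAt hu2
    simpa [hW] using this
  have hψmax : IsLocalMax (fun θ : ℝ => Complex.normSq (w (z₀ * Complex.exp ((θ : ℂ) * Complex.I)))) 0 := by
    apply Filter.Eventually.of_forall
    intro θ
    have hnorm : ‖z₀ * Complex.exp ((θ : ℂ) * Complex.I)‖ = r₀ := by
      rw [norm_mul, hz₀, Complex.norm_exp]
      simp
    have := hb _ hnorm
    have h1 : Complex.normSq (w (z₀ * Complex.exp ((θ : ℂ) * Complex.I))) ≤ 1 := by
      rw [← Complex.sq_norm]
      nlinarith [norm_nonneg (w (z₀ * Complex.exp ((θ:ℂ) * Complex.I))),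
        (this : ‖w (z₀ * Complex.exp ((θ:ℂ) * Complex.I))‖ ≤ 1)]
    simpa [← hW, hWnormSq] using h1
  have hkey2 : ((starRingEnd ℂ) W * ((z₀ * Complex.I) • D)).re = 0 := by
    have := hψmax.deriv_eq_zero
    rw [hψ.deriv] at this
    linarith
  -- conclude
  refine ⟨((starRingEnd ℂ) W * (z₀ • D)).re, hkey1, ?_⟩
  have hIm : ((starRingEnd ℂ) W * (z₀ * D)).im = 0 := by
    have : ((starRingEnd ℂ) W * ((z₀ * Complex.I) • D)).re
        = -((starRingEnd ℂ) W * (z₀ * D)).im := by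
      simp [smul_eq_mul, Complex.mul_re, Complex.mul_im, Complex.I_re, Complex.I_im]
      ring
    rw [this] at hkey2; linarith
  have hcW : (starRingEnd ℂ) W * (z₀ * D) = (((starRingEnd ℂ) W * (z₀ • D)).re : ℂ) := by
    apply Complex.ext
    · simp [smul_eq_mul]
    · simp [smul_eq_mul, hIm]
  have : W * ((starRingEnd ℂ) W * (z₀ * D)) = W * (((starRingEnd ℂ) W * (z₀ • D)).re : ℂ) := by
    rw [hcW]
  calc z₀ * D = (W * (starRingEnd ℂ) W) * (z₀ * D) := by
        rw [Complex.mul_conj, hWnormSq]; norm_num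
    _ = W * ((starRingEnd ℂ) W * (z₀ * D)) := by ring
    _ = (((starRingEnd ℂ) W * (z₀ • D)).re : ℂ) * W := by rw [hcW]; ring

/-- Möbius identity relating `‖β(1-q)‖² - ‖β-q‖²` to the disc `|q - β/(β+1)| < β/(β+1)`. -/
lemma mob_id (β : ℝ) (hβ : β + 1 ≠ 0) (q : ℂ) :
    Complex.normSq ((β:ℂ)*(1-q)) - Complex.normSq ((β:ℂ)-q)
      = (β^2-1) * (Complex.normSq (q - ((β/(β+1):ℝ):ℂ)) - (β/(β+1))^2) := by
  simp only [Complex.normSq_apply, Complex.mul_re, Complex.mul_im, Complex.sub_re,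
    Complex.sub_im, Complex.one_re, Complex.one_im, Complex.ofReal_re, Complex.ofReal_im]
  field_simp
  ring

/-- Key boundary inequality for the differential subordination argument. -/
lemma keyC (β k : ℝ) (q : ℂ) (hβ : 2 ≤ β) (hk : 1 ≤ k)
    (hcirc : Complex.normSq (q - ((β/(β+1):ℝ):ℂ)) = (β/(β+1))^2) (hq : q ≠ 0) :
    (β+1)/(2*(β-1)) ≤ (q + (k:ℂ)*(1-q)*((β:ℂ)-q)/(((1:ℂ)-(β:ℂ))*q)).re := by
  set x := q.re with hx
  set y := q.im with hy
  have hβ1 : β + 1 ≠ 0 := by positivity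
  have hβpos : (0:ℝ) < β - 1 := by linarith
  -- circle equation
  have hxy : (β+1)*(x^2+y^2) = 2*β*x := by
    have h0 : (x - β/(β+1))*(x - β/(β+1)) + y*y = (β/(β+1))^2 := by
      have h := hcirc
      rw [Complex.normSq_apply, Complex.sub_re, Complex.sub_im, Complex.ofReal_re,
        Complex.ofReal_im, sub_zero] at h
      exact h
    have h5 : ((β+1)^3) * ((β+1)*(x^2+y^2) - 2*β*x) = ((β+1)^3) * 0 := by
      field_simp at h0
      linear_combination (β+1)^2 * h0
    have := mul_left_cancel₀ (pow_ne_zero 3 hβ1) h5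
    linarith
  have hs : 0 < x^2 + y^2 := by
    have h := Complex.normSq_pos.2 hq
    rw [Complex.normSq_apply] at h
    nlinarith [h]
  have hxpos : 0 < x := by
    have h2βx : 0 < 2*β*x := by rw [← hxy]; exact mul_pos (by linarith) hs
    nlinarith [h2βx]
  have hxle' : (β+1)*x ≤ 2*β := by nlinarith [sq_nonneg y, hxy, hxpos]
  have hx2 : β + 1 - 2*x ≥ 0 := by nlinarith [hxle', sq_nonneg (β-1)]
  -- denominators
  have h1β : (1:ℝ) - β ≠ 0 := by intro h; linarith
  have hsne : x^2 + y^2 ≠ 0 := ne_of_gt hs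
  set N : ℂ := (k:ℂ)*(1-q)*((β:ℂ)-q) with hN
  set D : ℂ := ((1:ℂ)-(β:ℂ))*q with hD
  have hnsD : Complex.normSq D = (1-β)^2 * (x^2+y^2) := by
    rw [hD]
    simp only [Complex.normSq_apply, Complex.mul_re, Complex.mul_im, Complex.sub_re,
      Complex.sub_im, Complex.one_re, Complex.one_im, Complex.ofReal_re, Complex.ofReal_im,
      ← hx, ← hy]
    ring
  have hPnum : N.re * D.re + N.im * D.im
      = k*(1-β)*(β*x - (β+1)*(x^2+y^2) + x*(x^2+y^2)) := by
    rw [hN, hD]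
    simp only [Complex.mul_re, Complex.mul_im, Complex.sub_re, Complex.sub_im,
      Complex.one_re, Complex.one_im, Complex.ofReal_re, Complex.ofReal_im, ← hx, ← hy]
    ring
  have hre : (q + N/D).re = x + (N.re * D.re + N.im * D.im) / Complex.normSq D := by
    rw [Complex.add_re, Complex.div_re, ← hx, ← add_div]
  rw [hre, hPnum, hnsD]
  have hnum2 : k*(1-β)*(β*x - (β+1)*(x^2+y^2) + x*(x^2+y^2))
      = k*(1-β)*(x*((x^2+y^2)-β)) + (-(k*(1-β)))*((β+1)*(x^2+y^2) - 2*β*x) := by ring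
  have hxy0 : (β+1)*(x^2+y^2) - 2*β*x = 0 := by linarith
  rw [hnum2, hxy0, mul_zero, add_zero]
  have hBne : ((1:ℝ)-β)^2*(x^2+y^2) ≠ 0 := by
    exact mul_ne_zero (pow_ne_zero 2 h1β) hsne
  have hfrac : (k*(1-β)*(x*((x^2+y^2)-β))) / ((1-β)^2*(x^2+y^2))
      = k*(β+1-2*x)/(2*(β-1)) := by
    rw [div_eq_div_iff hBne (by positivity : (2:ℝ)*(β-1) ≠ 0)]
    linear_combination (-(k*((1:ℝ)-β)^2)) * hxy
  rw [hfrac, div_le_iff₀ (by linarith : (0:ℝ) < 2*(β-1)), add_mul,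
    div_mul_cancel₀ _ (by positivity : (2:ℝ)*(β-1) ≠ 0)]
  nlinarith [mul_nonneg (sub_nonneg.2 hk) hx2,
    mul_nonneg hxpos.le (by linarith : (0:ℝ) ≤ β-2)]

/-- norm vs normSq comparisons -/
lemma normSq_lt_iff {a : ℂ} {c : ℝ} (hc : 0 ≤ c) : Complex.normSq a < c^2 ↔ ‖a‖ < c := by
  rw [← Complex.sq_norm]
  exact pow_lt_pow_iff_left₀ (norm_nonneg a) hc (by norm_num)

lemma normSq_le_iff {a : ℂ} {c : ℝ} (hc : 0 ≤ c) : Complex.normSq a ≤ c^2 ↔ ‖a‖ ≤ c := by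
  rw [← Complex.sq_norm]
  exact pow_le_pow_iff_left₀ (norm_nonneg a) hc (by norm_num)

/-- `β` is outside the closed disc. -/
lemma mob_den_ne (β : ℝ) (hβ : 1 < β) (q : ℂ) (hq : ‖q - ((β/(β+1):ℝ):ℂ)‖ ≤ β/(β+1)) :
    (β:ℂ) - q ≠ 0 := by
  intro h
  have hq' : q = (β:ℂ) := by linear_combination -h
  rw [hq'] at hq
  have h1 : ((β:ℝ):ℂ) - ((β/(β+1):ℝ):ℂ) = ((β - β/(β+1) : ℝ):ℂ) := by push_cast; ring
  rw [h1, Complex.norm_real] at hq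
  have hβ1 : (0:ℝ) < β + 1 := by linarith
  have h2 : β - β/(β+1) = β^2/(β+1) := by field_simp; ring
  rw [h2] at hq
  rw [Real.norm_eq_abs] at hq
  rw [_root_.abs_of_nonneg (show (0:ℝ) ≤ β^2/(β+1) by positivity)] at hq
  rw [div_le_div_iff₀ hβ1 hβ1] at hq
  nlinarith

lemma mob_lt_iff (β : ℝ) (hβ : 1 < β) (q : ℂ) (hden : (β:ℂ) - q ≠ 0) :
    ‖(β:ℂ)*(1-q)/((β:ℂ)-q)‖ < 1 ↔ ‖q - ((β/(β+1):ℝ):ℂ)‖ < β/(β+1) := by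
  have hβ1 : β + 1 ≠ 0 := by positivity
  have hdenpos : 0 < ‖(β:ℂ)-q‖ := norm_pos_iff.2 hden
  have hc : (0:ℝ) ≤ β/(β+1) := by positivity
  have hb2 : 0 < β^2 - 1 := by nlinarith
  have hden2 : ‖(β:ℂ)-q‖^2 = Complex.normSq ((β:ℂ)-q) := by
    rw [Complex.sq_norm]
  rw [norm_div, div_lt_one hdenpos,
    ← normSq_lt_iff (norm_nonneg ((β:ℂ)-q)), hden2,
    ← sub_neg, mob_id β hβ1 q, ← normSq_lt_iff hc]
  constructor
  · intro h; nlinarith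
  · intro h; nlinarith

lemma mob_le_iff (β : ℝ) (hβ : 1 < β) (q : ℂ) (hden : (β:ℂ) - q ≠ 0) :
    ‖(β:ℂ)*(1-q)/((β:ℂ)-q)‖ ≤ 1 ↔ ‖q - ((β/(β+1):ℝ):ℂ)‖ ≤ β/(β+1) := by
  have hβ1 : β + 1 ≠ 0 := by positivity
  have hdenpos : 0 < ‖(β:ℂ)-q‖ := norm_pos_iff.2 hden
  have hc : (0:ℝ) ≤ β/(β+1) := by positivity
  have hb2 : 0 < β^2 - 1 := by nlinarith
  have hden2 : ‖(β:ℂ)-q‖^2 = Complex.normSq ((β:ℂ)-q) := by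
    rw [Complex.sq_norm]
  rw [norm_div, div_le_one hdenpos,
    ← normSq_le_iff (norm_nonneg ((β:ℂ)-q)), hden2,
    ← sub_nonpos, mob_id β hβ1 q, ← normSq_le_iff hc]
  constructor
  · intro h; nlinarith
  · intro h; nlinarith



/-- Theorem 2.1 (case `2 ≤ β < 3`): if `f ∈ 𝒜` satisfies
`Re(1 + z f''/f') < (β+1)/(2(β−1))` on the unit disc, then `z f'/f ≺ β(1−z)/(β−z)`,
`|z f'/f − β/(β+1)| < β/(β+1)`, `f` is starlike, and `F(z) = ∫₀^z f(t)/t dt` is convex.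
(The quotient `z f'(z)/f(z)` is taken with value `1` at `z = 0`.) -/
theorem thm1_case1 (β : ℝ) (hβ1 : 2 ≤ β) (hβ2 : β < 3)
    (f : ℂ → ℂ) (hf : DifferentiableOn ℂ f {z : ℂ | ‖z‖ < 1})
    (hf0 : f 0 = 0) (hf'0 : deriv f 0 = 1)
    (hf' : ∀ z : ℂ, ‖z‖ < 1 → deriv f z ≠ 0)
    (hfz : ∀ z : ℂ, ‖z‖ < 1 → z ≠ 0 → f z ≠ 0)
    (hre : ∀ z : ℂ, ‖z‖ < 1 →
      (1 + z * deriv (deriv f) z / deriv f z).re < (β + 1) / (2 * (β - 1))) :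
    (∃ w : ℂ → ℂ, DifferentiableOn ℂ w {z : ℂ | ‖z‖ < 1} ∧ w 0 = 0 ∧
        (∀ z : ℂ, ‖z‖ < 1 → ‖w z‖ < 1) ∧
        (∀ z : ℂ, ‖z‖ < 1 →
          (if z = 0 then (1 : ℂ) else z * deriv f z / f z) =
            (β : ℂ) * (1 - w z) / ((β : ℂ) - w z))) ∧
    (∀ z : ℂ, ‖z‖ < 1 →
      ‖(if z = 0 then (1 : ℂ) else z * deriv f z / f z) - (β : ℂ) / ((β : ℂ) + 1)‖
        < β / (β + 1)) ∧
    (∀ z : ℂ, ‖z‖ < 1 →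
      0 < (if z = 0 then (1 : ℂ) else z * deriv f z / f z).re) ∧
    (∀ F : ℂ → ℂ, DifferentiableOn ℂ F {z : ℂ | ‖z‖ < 1} → F 0 = 0 →
      (∀ z : ℂ, ‖z‖ < 1 → deriv F z = if z = 0 then (1 : ℂ) else f z / z) →
      ∀ z : ℂ, ‖z‖ < 1 → 0 < (1 + z * deriv (deriv F) z / deriv F z).re) := by
  have hball : {z : ℂ | ‖z‖ < 1} = Metric.ball (0:ℂ) 1 := by
    ext z; simp [Metric.mem_ball, dist_zero_right]
  have hΩopen : IsOpen {z : ℂ | ‖z‖ < 1} := by rw [hball]; exact Metric.isOpen_ball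
  have h0Ω : (0:ℂ) ∈ {z : ℂ | ‖z‖ < 1} := by norm_num
  -- the function g = f(z)/z with g(0)=1
  set g : ℂ → ℂ := dslope f 0 with hgdef
  have hgd : DifferentiableOn ℂ g {z : ℂ | ‖z‖ < 1} :=
    (Complex.differentiableOn_dslope (hΩopen.mem_nhds h0Ω)).mpr hf
  have hg0 : g 0 = 1 := by rw [hgdef, dslope_same, hf'0]
  have hgz : ∀ z : ℂ, z ≠ 0 → g z = f z / z := by
    intro z hz
    rw [hgdef, dslope_of_ne f hz, slope_def_field]
    simp [hf0]
  have hfzg : ∀ z : ℂ, f z = z * g z := by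
    intro z
    by_cases hz : z = 0
    · simp [hz, hf0]
    · rw [hgz z hz]; field_simp
  have hgne : ∀ z : ℂ, ‖z‖ < 1 → g z ≠ 0 := by
    intro z hz
    by_cases h0 : z = 0
    · rw [h0, hg0]; exact one_ne_zero
    · rw [hgz z h0]
      exact div_ne_zero (hfz z hz h0) h0
  -- q = z f' / f extended by 1
  set q : ℂ → ℂ := fun z => deriv f z / g z with hqdef
  have hq0 : q 0 = 1 := by rw [hqdef]; simp [hf'0, hg0]
  have hqval : ∀ z : ℂ, ‖z‖ < 1 →
      (if z = 0 then (1 : ℂ) else z * deriv f z / f z) = q z := by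
    intro z hz
    by_cases h0 : z = 0
    · rw [if_pos h0, h0, hq0]
    · rw [if_neg h0, hqdef]
      simp only []
      rw [hgz z h0, div_div_eq_mul_div]
      ring
  have hqne : ∀ z : ℂ, ‖z‖ < 1 → q z ≠ 0 := by
    intro z hz
    by_cases h0 : z = 0
    · rw [h0, hq0]; exact one_ne_zero
    · exact div_ne_zero (hf' z hz) (hgne z hz)
  -- analyticity
  have hfa : AnalyticOnNhd ℂ f {z : ℂ | ‖z‖ < 1} := hf.analyticOnNhd hΩopen
  have hga : AnalyticOnNhd ℂ g {z : ℂ | ‖z‖ < 1} := hgd.analyticOnNhd hΩopen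
  have hf'a : AnalyticOnNhd ℂ (deriv f) {z : ℂ | ‖z‖ < 1} := hfa.deriv
  have hg'a : AnalyticOnNhd ℂ (deriv g) {z : ℂ | ‖z‖ < 1} := hga.deriv
  have hgder : ∀ z : ℂ, ‖z‖ < 1 → HasDerivAt g (deriv g z) z := fun z hz =>
    ((hga z hz).differentiableAt).hasDerivAt
  have hf'der : ∀ z : ℂ, ‖z‖ < 1 → HasDerivAt (deriv f) (deriv (deriv f) z) z := fun z hz =>
    ((hf'a z hz).differentiableAt).hasDerivAt
  -- first derivative of f via g
  have hderf : ∀ z : ℂ, ‖z‖ < 1 → deriv f z = g z + z * deriv g z := by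
    intro z hz
    have hfe : f = fun w => w * g w := funext hfzg
    have h1 : HasDerivAt (fun w : ℂ => w * g w) (1 * g z + z * deriv g z) z :=
      (hasDerivAt_id z).mul (hgder z hz)
    rw [hfe]
    rw [h1.deriv]; ring
  -- derivative of q
  have hqder : ∀ z : ℂ, ‖z‖ < 1 → HasDerivAt q
      ((deriv (deriv f) z * g z - deriv f z * deriv g z) / g z ^ 2) z := by
    intro z hz
    exact (hf'der z hz).div (hgder z hz) (hgne z hz)
  have hqd : ∀ z : ℂ, ‖z‖ < 1 → DifferentiableAt ℂ q z := fun z hz =>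
    (hqder z hz).differentiableAt
  have hqderval : ∀ z : ℂ, ‖z‖ < 1 →
      deriv q z = (deriv (deriv f) z * g z - deriv f z * deriv g z) / g z ^ 2 := fun z hz =>
    (hqder z hz).deriv
  -- the key identity q + z q'/q = 1 + z f''/f'
  have hqid : ∀ z : ℂ, ‖z‖ < 1 →
      q z + z * deriv q z / q z = 1 + z * deriv (deriv f) z / deriv f z := by
    intro z hz
    have hB : g z ≠ 0 := hgne z hz
    have hA : deriv f z ≠ 0 := hf' z hz
    have hAB : deriv f z = g z + z * deriv g z := hderf z hz
    rw [hqderval z hz, hqdef]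
    simp only []
    rw [hAB]
    have hA' : g z + z * deriv g z ≠ 0 := hAB ▸ hA
    field_simp
    ring
  have hPre : ∀ z : ℂ, ‖z‖ < 1 →
      (q z + z * deriv q z / q z).re < (β + 1) / (2 * (β - 1)) := by
    intro z hz
    rw [hqid z hz]
    exact hre z hz
  -- basic constants
  have hβgt1 : (1:ℝ) < β := by linarith
  have hβ1ne : β + 1 ≠ 0 := by positivity
  have hc₀pos : 0 < β/(β+1) := by positivity
  -- THE MAIN SUBORDINATION STEP
  have hmain : ∀ z : ℂ, ‖z‖ < 1 → ‖q z - ((β/(β+1):ℝ):ℂ)‖ < β/(β+1) := by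
    by_contra hcon
    push_neg at hcon
    obtain ⟨z₁, hz₁, hz₁ge⟩ := hcon
    have hqcont : ∀ z : ℂ, ‖z‖ < 1 → ContinuousAt q z := fun z hz => (hqd z hz).continuousAt
    set φ : ℂ → ℝ := fun z => ‖q z - ((β/(β+1):ℝ):ℂ)‖ with hφdef
    have hφcont : ContinuousOn φ (Metric.closedBall 0 ‖z₁‖) := by
      intro z hz
      rw [Metric.mem_closedBall, dist_zero_right] at hz
      exact (((hqcont z (lt_of_le_of_lt hz hz₁)).sub continuousAt_const).norm).continuousWithinAt
    set C : Set ℂ := Metric.closedBall 0 ‖z₁‖ ∩ φ ⁻¹' (Set.Ici (β/(β+1))) with hCdef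
    have hCclosed : IsClosed C := hφcont.preimage_isClosed_of_isClosed
      Metric.isClosed_closedBall isClosed_Ici
    have hCcpt : IsCompact C := (isCompact_closedBall (0:ℂ) ‖z₁‖).of_isClosed_subset hCclosed
      Set.inter_subset_left
    have hz₁C : z₁ ∈ C := ⟨by rw [Metric.mem_closedBall, dist_zero_right], hz₁ge⟩
    obtain ⟨z₀, hz₀C, hz₀min⟩ := hCcpt.exists_isMinOn ⟨z₁, hz₁C⟩ continuous_norm.continuousOn
    have hz₀ball : ‖z₀‖ ≤ ‖z₁‖ := by
      have := hz₀C.1; rwa [Metric.mem_closedBall, dist_zero_right] at this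
    have hz₀φ : β/(β+1) ≤ φ z₀ := hz₀C.2
    have hr₀lt1 : ‖z₀‖ < 1 := lt_of_le_of_lt hz₀ball hz₁
    have hr₀pos : 0 < ‖z₀‖ := by
      rcases eq_or_lt_of_le (norm_nonneg z₀) with h | h
      · exfalso
        have hz00 : z₀ = 0 := by rwa [eq_comm, norm_eq_zero] at h
        have hφ0 : φ 0 = ‖(1:ℂ) - ((β/(β+1):ℝ):ℂ)‖ := by rw [hφdef]; simp [hq0]
        rw [hz00, hφ0] at hz₀φ
        have h1 : (1:ℂ) - ((β/(β+1):ℝ):ℂ) = ((1 - β/(β+1) : ℝ):ℂ) := by push_cast; ring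
        rw [h1, Complex.norm_real, Real.norm_eq_abs] at hz₀φ
        have h2 : 1 - β/(β+1) = 1/(β+1) := by field_simp; ring
        rw [h2, _root_.abs_of_nonneg (by positivity)] at hz₀φ
        rw [div_le_div_iff₀ (by linarith) (by linarith)] at hz₀φ
        nlinarith
      · exact h
    have hlt : ∀ z : ℂ, ‖z‖ < ‖z₀‖ → φ z < β/(β+1) := by
      intro z hz
      by_contra hzge
      push_neg at hzge
      have hzC : z ∈ C := ⟨by rw [Metric.mem_closedBall, dist_zero_right]; linarith, hzge⟩
      exact absurd (hz₀min hzC) (not_le.mpr hz)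
    have hle : ∀ z : ℂ, ‖z‖ ≤ ‖z₀‖ → φ z ≤ β/(β+1) := by
      intro z hz
      rcases lt_or_eq_of_le hz with h | h
      · exact (hlt z h).le
      · have hz1' : ‖z‖ < 1 := by rw [h]; exact hr₀lt1
        have h2 : Tendsto (fun n : ℕ => ((n:ℝ)+2)) atTop atTop :=
          tendsto_atTop_add_const_right _ 2 tendsto_natCast_atTop_atTop
        have h3 : Tendsto (fun n : ℕ => ((n:ℝ)+2)⁻¹) atTop (𝓝 0) := h2.inv_tendsto_atTop
        have h4 : Tendsto (fun n : ℕ => 1 - ((n:ℝ)+2)⁻¹) atTop (𝓝 (1 - 0)) :=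
          tendsto_const_nhds.sub h3
        have htend : Tendsto (fun n : ℕ => (1 - ((n:ℝ)+2)⁻¹) • z) atTop (𝓝 z) := by
          have := h4.smul_const z
          simpa using this
        have hφtend : Tendsto (fun n : ℕ => φ ((1 - ((n:ℝ)+2)⁻¹) • z)) atTop (𝓝 (φ z)) := by
          have hφca : ContinuousAt φ z := ((hqcont z hz1').sub continuousAt_const).norm
          exact hφca.tendsto.comp htend
        refine le_of_tendsto hφtend (Filter.Eventually.of_forall fun n => ?_)
        have hfac0 : (0:ℝ) < ((n:ℝ)+2)⁻¹ := by positivity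
        have hfac1 : 1 - ((n:ℝ)+2)⁻¹ < 1 := by linarith
        have hfacnn : (0:ℝ) ≤ 1 - ((n:ℝ)+2)⁻¹ := by
          have : ((n:ℝ)+2)⁻¹ ≤ 2⁻¹ := by
            apply inv_anti₀ (by norm_num)
            have : (0:ℝ) ≤ (n:ℝ) := Nat.cast_nonneg n
            linarith
          linarith
        have hnlt : ‖(1 - ((n:ℝ)+2)⁻¹) • z‖ < ‖z₀‖ := by
          rw [norm_smul, Real.norm_eq_abs, _root_.abs_of_nonneg hfacnn, ← h]
          have hzpos : 0 < ‖z‖ := by rw [h]; exact hr₀pos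
          nlinarith
        exact (hlt _ hnlt).le
    have hz₀eq : ‖q z₀ - ((β/(β+1):ℝ):ℂ)‖ = β/(β+1) :=
      le_antisymm (hle z₀ le_rfl) hz₀φ
    -- the Schwarz function
    set w : ℂ → ℂ := fun z => (β:ℂ)*(1 - q z)/((β:ℂ) - q z) with hwdef
    have hdenne : ∀ z : ℂ, ‖z‖ ≤ ‖z₀‖ → (β:ℂ) - q z ≠ 0 := fun z hz =>
      mob_den_ne β hβgt1 (q z) (hle z hz)
    have hwdOn : DifferentiableOn ℂ w (Metric.ball 0 ‖z₀‖) := by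
      intro z hz
      rw [Metric.mem_ball, dist_zero_right] at hz
      have hz1' : ‖z‖ < 1 := lt_trans hz hr₀lt1
      exact ((((differentiableAt_const _).sub (hqd z hz1')).const_mul _).div
        ((differentiableAt_const _).sub (hqd z hz1')) (hdenne z hz.le)).differentiableWithinAt
    have hq₀der : HasDerivAt q (deriv q z₀) z₀ := (hqd z₀ hr₀lt1).hasDerivAt
    have hnum : HasDerivAt (fun z => (β:ℂ)*(1 - q z)) ((β:ℂ)*(0 - deriv q z₀)) z₀ :=
      ((hasDerivAt_const z₀ (1:ℂ)).sub hq₀der).const_mul _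
    have hden : HasDerivAt (fun z => (β:ℂ) - q z) (0 - deriv q z₀) z₀ :=
      (hasDerivAt_const z₀ _).sub hq₀der
    have hwder : HasDerivAt w
        ((((β:ℂ)*(0 - deriv q z₀))*((β:ℂ) - q z₀) - ((β:ℂ)*(1 - q z₀))*(0 - deriv q z₀))
          /((β:ℂ) - q z₀)^2) z₀ := hnum.div hden (hdenne z₀ le_rfl)
    have hw0 : w 0 = 0 := by
      show (β:ℂ) * (1 - q 0) / ((β:ℂ) - q 0) = 0
      rw [hq0]; simp
    have hwlt : ∀ z : ℂ, ‖z‖ < ‖z₀‖ → ‖w z‖ < 1 := fun z hz =>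
      (mob_lt_iff β hβgt1 (q z) (hdenne z hz.le)).mpr (hlt z hz)
    have hwb : ∀ z : ℂ, ‖z‖ = ‖z₀‖ → ‖w z‖ ≤ 1 := fun z hz =>
      (mob_le_iff β hβgt1 (q z) (hdenne z hz.le)).mpr (hle z hz.le)
    have hw1 : ‖w z₀‖ = 1 := by
      refine le_antisymm ((mob_le_iff β hβgt1 (q z₀) (hdenne z₀ le_rfl)).mpr (hle z₀ le_rfl)) ?_
      by_contra hlt1
      push_neg at hlt1
      have := (mob_lt_iff β hβgt1 (q z₀) (hdenne z₀ le_rfl)).mp hlt1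
      linarith [hz₀eq.ge.trans this.le]
    obtain ⟨k, hk1, hkeq⟩ := jack_lemma hr₀pos hwdOn hwder.differentiableAt hw0 rfl hwlt hwb hw1
    -- translate the Jack equation to q
    have hQne : q z₀ ≠ 0 := hqne z₀ hr₀lt1
    have hQden : (β:ℂ) - q z₀ ≠ 0 := hdenne z₀ le_rfl
    have hβC0 : (β:ℂ) ≠ 0 := Complex.ofReal_ne_zero.mpr (by linarith)
    have h1βne : (1:ℂ) - (β:ℂ) ≠ 0 := by
      intro h
      have h' : ((1 - β : ℝ):ℂ) = 0 := by push_cast; linear_combination h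
      have := Complex.ofReal_eq_zero.mp h'; linarith
    have hwderval : deriv w z₀
        = (((β:ℂ)*(0 - deriv q z₀))*((β:ℂ) - q z₀) - ((β:ℂ)*(1 - q z₀))*(0 - deriv q z₀))
          /((β:ℂ) - q z₀)^2 := hwder.deriv
    rw [hwderval] at hkeq
    have hwz₀ : w z₀ = (β:ℂ)*(1 - q z₀)/((β:ℂ) - q z₀) := rfl
    rw [hwz₀] at hkeq
    have hzdq : z₀ * deriv q z₀ = (k:ℂ)*(1 - q z₀)*((β:ℂ) - q z₀)/((1:ℂ)-(β:ℂ)) := by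
      rw [eq_div_iff h1βne]
      field_simp at hkeq
      have hfac : ((β:ℂ)*((β:ℂ)-q z₀)) * (z₀ * deriv q z₀ * ((1:ℂ)-(β:ℂ)))
          = ((β:ℂ)*((β:ℂ)-q z₀)) * ((k:ℂ)*(1 - q z₀)*((β:ℂ)-q z₀)) := by
        linear_combination ((β:ℂ)*((β:ℂ)-q z₀)) * hkeq
      exact mul_left_cancel₀ (mul_ne_zero hβC0 hQden) hfac
    have hcirc : Complex.normSq (q z₀ - ((β/(β+1):ℝ):ℂ)) = (β/(β+1))^2 := by
      rw [← Complex.sq_norm, hz₀eq]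
    have hkey := keyC β k (q z₀) hβ1 hk1 hcirc hQne
    have hform : q z₀ + z₀ * deriv q z₀ / q z₀
        = q z₀ + (k:ℂ)*(1 - q z₀)*((β:ℂ)-q z₀)/(((1:ℂ)-(β:ℂ))*(q z₀)) := by
      rw [hzdq, div_div]
    have hcontra := hPre z₀ hr₀lt1
    rw [hform] at hcontra
    linarith [hkey, hcontra]
  -- positivity of Re q
  have hqrepos : ∀ z : ℂ, ‖z‖ < 1 → 0 < (q z).re := by
    intro z hz
    have h := (normSq_lt_iff hc₀pos.le).mpr (hmain z hz)
    rw [Complex.normSq_apply, Complex.sub_re, Complex.sub_im, Complex.ofReal_re,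
      Complex.ofReal_im, sub_zero] at h
    nlinarith [sq_nonneg (q z).im, hc₀pos]
  have hcast : (β : ℂ) / ((β : ℂ) + 1) = ((β/(β+1):ℝ):ℂ) := by push_cast; ring
  refine ⟨?_, ?_, ?_, ?_⟩
  · -- the Schwarz function w
    refine ⟨fun z => (β:ℂ)*(1 - q z)/((β:ℂ) - q z), ?_, ?_, ?_, ?_⟩
    · intro z hz
      have hden : (β:ℂ) - q z ≠ 0 := mob_den_ne β hβgt1 (q z) (hmain z hz).le
      exact ((((differentiableAt_const _).sub (hqd z hz)).const_mul _).div
        (((differentiableAt_const _).sub (hqd z hz))) hden).differentiableWithinAt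
    · show (β:ℂ) * (1 - q 0) / ((β:ℂ) - q 0) = 0
      rw [hq0]; simp
    · intro z hz
      have hden : (β:ℂ) - q z ≠ 0 := mob_den_ne β hβgt1 (q z) (hmain z hz).le
      exact (mob_lt_iff β hβgt1 (q z) hden).mpr (hmain z hz)
    · intro z hz
      rw [hqval z hz]
      have hden : (β:ℂ) - q z ≠ 0 := mob_den_ne β hβgt1 (q z) (hmain z hz).le
      have hden2 : (β:ℂ) - (β:ℂ)*(1 - q z)/((β:ℂ) - q z) ≠ 0 := by
        intro h
        have hw1 : ‖(β:ℂ)*(1 - q z)/((β:ℂ) - q z)‖ < 1 :=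
          (mob_lt_iff β hβgt1 (q z) hden).mpr (hmain z hz)
        have : (β:ℂ)*(1 - q z)/((β:ℂ) - q z) = (β:ℂ) := by linear_combination -h
        rw [this] at hw1
        rw [Complex.norm_real, Real.norm_eq_abs, _root_.abs_of_nonneg (by linarith)] at hw1
        linarith
      rw [eq_div_iff hden2]
      have hWeq : ((β:ℂ)*(1 - q z)/((β:ℂ) - q z)) * ((β:ℂ) - q z) = (β:ℂ)*(1 - q z) :=
        div_mul_cancel₀ _ hden
      field_simp
      ring
  · intro z hz
    rw [hqval z hz, hcast]
    exact hmain z hz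
  · intro z hz
    rw [hqval z hz]
    exact hqrepos z hz
  · intro F hFd hF0 hF' z hz
    have hgite : ∀ y : ℂ, g y = if y = 0 then (1:ℂ) else f y / y := by
      intro y
      by_cases h0 : y = 0
      · rw [if_pos h0, h0, hg0]
      · rw [if_neg h0, hgz y h0]
    have hgF : ∀ y : ℂ, ‖y‖ < 1 → deriv F y = g y := by
      intro y hy; rw [hF' y hy, hgite]
    have hFF : deriv (deriv F) z = deriv g z := by
      apply Filter.EventuallyEq.deriv_eq
      filter_upwards [hΩopen.mem_nhds hz] with y hy
      exact hgF y hy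
    rw [hFF, hgF z hz]
    have hqg : 1 + z * deriv g z / g z = q z := by
      rw [hqdef]
      simp only []
      rw [hderf z hz]
      field_simp [hgne z hz]
    rw [hqg]
    exact hqrepos z hz
end

section
/- Let f ∈ A with f'(z) ≠ 0 for all z ∈ U and f(z) ≠ 0 for all z ∈ U \ {0}. If Re(1 + z f''(z)/f'(z)) < 3/2 for all z ∈ U, then z f'(z)/f(z) ≺ 2(1−z)/(2−z) and |z f'(z)/f(z) − 2/3| < 2/3 for all z ∈ U. -/
open Metric Complex Set Filter


lemma normSq_norm (z : ℂ) : Complex.normSq z = ‖z‖^2 := by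
  rw [Complex.normSq_eq_norm_sq]

lemma normSq_diff (g : ℂ) :
    Complex.normSq (2 - 2*g) - Complex.normSq (2 - g) = 3 * Complex.normSq (g - 2/3) - 4/3 := by
  have h1 : ((2:ℂ)/3).re = 2/3 := by simp [Complex.div_re, Complex.normSq_apply]
  have h2 : ((2:ℂ)/3).im = 0 := by simp [Complex.div_im, Complex.normSq_apply]
  simp only [Complex.normSq_apply, Complex.sub_re, Complex.sub_im, Complex.mul_re, Complex.mul_im,
    h1, h2]
  norm_num
  ring

lemma ne_two_of_le (g : ℂ) (h : ‖g - 2/3‖ ≤ 2/3) : g ≠ 2 := by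
  intro hg
  rw [hg] at h
  have : ((2:ℂ) - 2/3) = 4/3 := by norm_num
  rw [this, show ((4:ℂ)/3) = ((4/3:ℝ):ℂ) by push_cast; ring, Complex.norm_real,
    Real.norm_eq_abs] at h
  rw [_root_.abs_of_nonneg (by norm_num : (0:ℝ) ≤ 4/3)] at h
  norm_num at h

lemma wnorm_lt (g : ℂ) (h : ‖g - 2/3‖ < 2/3) : ‖2*(1-g)/(2-g)‖ < 1 := by
  have hg : g ≠ 2 := ne_two_of_le g h.le
  have hd : (2:ℂ) - g ≠ 0 := sub_ne_zero.mpr (Ne.symm hg)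
  have hdpos : 0 < ‖(2:ℂ) - g‖ := norm_pos_iff.mpr hd
  rw [norm_div, div_lt_one hdpos]
  have key := normSq_diff g
  have h1 : Complex.normSq (g - 2/3) < 4/9 := by
    rw [normSq_norm]
    nlinarith [norm_nonneg (g - (2:ℂ)/3)]
  have h2 : Complex.normSq (2 - 2*g) < Complex.normSq (2 - g) := by nlinarith
  rw [normSq_norm, normSq_norm] at h2
  have := lt_of_pow_lt_pow_left₀ 2 (norm_nonneg _) h2
  rw [show (2:ℂ)*(1-g) = 2 - 2*g by ring]
  exact this

lemma wnorm_le (g : ℂ) (h : ‖g - 2/3‖ ≤ 2/3) : ‖2*(1-g)/(2-g)‖ ≤ 1 := by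
  have hg : g ≠ 2 := ne_two_of_le g h
  have hd : (2:ℂ) - g ≠ 0 := sub_ne_zero.mpr (Ne.symm hg)
  have hdpos : 0 < ‖(2:ℂ) - g‖ := norm_pos_iff.mpr hd
  rw [norm_div, div_le_one hdpos]
  have key := normSq_diff g
  have h1 : Complex.normSq (g - 2/3) ≤ 4/9 := by
    rw [normSq_norm]
    nlinarith [norm_nonneg (g - (2:ℂ)/3)]
  have h2 : Complex.normSq (2 - 2*g) ≤ Complex.normSq (2 - g) := by nlinarith
  rw [normSq_norm, normSq_norm] at h2
  have := le_of_pow_le_pow_left₀ (two_ne_zero) (norm_nonneg _) h2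
  rw [show (2:ℂ)*(1-g) = 2 - 2*g by ring]
  exact this

lemma wnorm_eq (g : ℂ) (h : ‖g - 2/3‖ = 2/3) : ‖2*(1-g)/(2-g)‖ = 1 := by
  have hg : g ≠ 2 := ne_two_of_le g h.le
  have hd : (2:ℂ) - g ≠ 0 := sub_ne_zero.mpr (Ne.symm hg)
  have hdpos : 0 < ‖(2:ℂ) - g‖ := norm_pos_iff.mpr hd
  rw [norm_div, div_eq_one_iff_eq hdpos.ne']
  have key := normSq_diff g
  have h1 : Complex.normSq (g - 2/3) = 4/9 := by rw [normSq_norm, h]; norm_num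
  have h2 : Complex.normSq (2 - 2*g) = Complex.normSq (2 - g) := by nlinarith
  rw [normSq_norm, normSq_norm] at h2
  have h3 : ‖2*(1-g)‖ = ‖(2:ℂ) - 2*g‖ := by ring_nf
  rw [h3]
  nlinarith [norm_nonneg ((2:ℂ) - 2*g), norm_nonneg ((2:ℂ) - g)]


lemma hasDerivAt_normSq_comp {u : ℝ → ℂ} {V : ℂ} {t : ℝ} (hu : HasDerivAt u V t) :
    HasDerivAt (fun s => Complex.normSq (u s)) (2 * ((u t).re * V.re + (u t).im * V.im)) t := by
  have hre : HasDerivAt (fun s => (u s).re) V.re t :=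
    Complex.reCLM.hasFDerivAt.comp_hasDerivAt t hu
  have him : HasDerivAt (fun s => (u s).im) V.im t :=
    Complex.imCLM.hasFDerivAt.comp_hasDerivAt t hu
  have := (hre.mul hre).add (him.mul him)
  have h2 : V.re * (u t).re + (u t).re * V.re + (V.im * (u t).im + (u t).im * V.im)
      = 2 * ((u t).re * V.re + (u t).im * V.im) := by ring
  rw [h2] at this
  exact this.congr_of_eventuallyEq
    (Filter.Eventually.of_forall fun s => by simp [Complex.normSq_apply])

lemma grow {O : Set ℂ} (hO : IsOpen O) {r : ℝ} (hr0 : 0 ≤ r) (hr1 : r < 1)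
    (hsub : Metric.closedBall (0:ℂ) r ⊆ O) :
    ∃ ρ : ℝ, r < ρ ∧ ρ < 1 ∧ ∀ z : ℂ, ‖z‖ ≤ ρ → z ∈ O := by
  obtain ⟨δ, hδ0, hδ⟩ := (isCompact_closedBall (0:ℂ) r).exists_thickening_subset_open hO hsub
  refine ⟨min (r + δ/2) ((r+1)/2), lt_min (by linarith) (by linarith), ?_, ?_⟩
  · exact (min_le_right _ _).trans_lt (by linarith)
  · intro z hz
    apply hδ
    rw [Metric.mem_thickening_iff]
    by_cases h : ‖z‖ ≤ r
    · exact ⟨z, by simpa [Metric.mem_closedBall, dist_zero_right] using h, by simpa using hδ0⟩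
    · push_neg at h
      have hz0 : (0:ℝ) < ‖z‖ := lt_of_le_of_lt hr0 h
      refine ⟨((r/‖z‖ : ℝ) : ℂ) * z, ?_, ?_⟩
      · simp only [Metric.mem_closedBall, dist_zero_right, norm_mul, Complex.norm_real,
          Real.norm_eq_abs]
        rw [_root_.abs_of_nonneg (div_nonneg hr0 hz0.le), div_mul_cancel₀ _ hz0.ne']
      · have he : z - ((r/‖z‖ : ℝ) : ℂ) * z = ((1 - r/‖z‖ : ℝ) : ℂ) * z := by
          push_cast; ring
        rw [dist_eq_norm, he, norm_mul, Complex.norm_real, Real.norm_eq_abs,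
          _root_.abs_of_nonneg (by rw [sub_nonneg, div_le_one hz0]; exact h.le)]
        rw [sub_mul, one_mul, div_mul_cancel₀ _ hz0.ne']
        have hzρ : ‖z‖ ≤ r + δ/2 := le_trans hz (min_le_left _ _)
        linarith

lemma final_ineq (A : ℂ) (k : ℝ) (hk : 1 ≤ k) (hA : A ≠ 0)
    (hN : Complex.normSq (A - 2/3) = 4/9) :
    (3:ℝ)/2 ≤ (A - (k:ℂ)*(1-A)*(2-A)/A).re := by
  have h1 : ((2:ℂ)/3).re = 2/3 := by simp [Complex.div_re, Complex.normSq_apply]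
  have h2 : ((2:ℂ)/3).im = 0 := by simp [Complex.div_im, Complex.normSq_apply]
  set x := A.re with hx
  set y := A.im with hy
  have hN' : x*x + y*y = 4/3*x := by
    have := hN
    simp only [Complex.normSq_apply, Complex.sub_re, Complex.sub_im, h1, h2, ← hx, ← hy] at this
    nlinarith
  have hNpos : 0 < x*x + y*y := by
    have := Complex.normSq_pos.mpr hA
    simpa [Complex.normSq_apply, ← hx, ← hy] using this
  have hx0 : 0 < x := by nlinarith
  have hx43 : x ≤ 4/3 := by nlinarith
  have hE : A - (k:ℂ)*(1-A)*(2-A)/A = A + 3*(k:ℂ) - (k:ℂ)*A - 2*(k:ℂ)*A⁻¹ := by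
    field_simp
    ring
  rw [hE]
  have hinv_re : (A⁻¹).re = x / (x*x + y*y) := by
    rw [Complex.inv_re]; simp [Complex.normSq_apply, ← hx, ← hy]
  simp only [Complex.add_re, Complex.sub_re, Complex.mul_re, Complex.ofReal_re, Complex.ofReal_im,
    Complex.mul_im, hinv_re, ← hx, ← hy]
  have hIm : (A⁻¹).im = -y / (x*x+y*y) := by
    rw [Complex.inv_im]; simp [Complex.normSq_apply, ← hx, ← hy]
  rw [hN']
  have hdiv : x / (4/3*x) = 3/4 := by
    rw [div_eq_iff (by nlinarith : (4:ℝ)/3*x ≠ 0)]; ring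
  rw [hdiv]
  simp only [Complex.re_ofNat, Complex.im_ofNat]
  nlinarith

lemma solve_rel (z₀ A Bc : ℂ) (k : ℝ) (h2A : (2:ℂ) - A ≠ 0)
    (hrel : z₀ * (-2*Bc/(2 - A)^2) = (k:ℂ) * (2*(1 - A)/(2 - A))) :
    z₀ * Bc = -(k:ℂ)*(1 - A)*(2 - A) := by
  field_simp at hrel
  have h2 : z₀ * Bc * (2 - A) = (-(k:ℂ)*(1 - A)*(2 - A)) * (2 - A) := by
    linear_combination (A - 2) * hrel
  exact mul_right_cancel₀ h2A h2

lemma id_aux (z d dd c : ℂ) (hz : z ≠ 0) (hd : d ≠ 0) (hc : c ≠ 0) :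
    z * d / c + z * (((1 * d + z * dd) * c - z * d * d) / c ^ 2) / (z * d / c)
      = 1 + z * dd / d := by
  field_simp
  ring

lemma wform_aux (g : ℂ) (hg : g ≠ 2) :
    g = 2 * (1 - (2*(1-g)/(2-g))) / (2 - (2*(1-g)/(2-g))) := by
  have h2 : (2:ℂ) - g ≠ 0 := sub_ne_zero.mpr (Ne.symm hg)
  rw [show (2:ℂ) - 2*(1-g)/(2-g) = 2/(2-g) by field_simp; ring,
      show (1:ℂ) - 2*(1-g)/(2-g) = g/(2-g) by field_simp; ring]
  field_simp

/-- Corollary 2.1: if `f ∈ 𝒜` satisfies `Re(1 + z f''/f') < 3/2` on the unit disc,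
then `z f'/f ≺ 2(1−z)/(2−z)` and `|z f'/f − 2/3| < 2/3` (value `1` at `z = 0`). -/
theorem cor1 (f : ℂ → ℂ) (hf : DifferentiableOn ℂ f {z : ℂ | ‖z‖ < 1})
    (hf0 : f 0 = 0) (hf'0 : deriv f 0 = 1)
    (hf' : ∀ z : ℂ, ‖z‖ < 1 → deriv f z ≠ 0)
    (hfz : ∀ z : ℂ, ‖z‖ < 1 → z ≠ 0 → f z ≠ 0)
    (hre : ∀ z : ℂ, ‖z‖ < 1 →
      (1 + z * deriv (deriv f) z / deriv f z).re < 3 / 2) :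
    (∃ w : ℂ → ℂ, DifferentiableOn ℂ w {z : ℂ | ‖z‖ < 1} ∧ w 0 = 0 ∧
        (∀ z : ℂ, ‖z‖ < 1 → ‖w z‖ < 1) ∧
        (∀ z : ℂ, ‖z‖ < 1 →
          (if z = 0 then (1 : ℂ) else z * deriv f z / f z) =
            2 * (1 - w z) / (2 - w z))) ∧
    (∀ z : ℂ, ‖z‖ < 1 →
      ‖(if z = 0 then (1 : ℂ) else z * deriv f z / f z) - 2 / 3‖ < 2 / 3) := by
  have hUb : {z : ℂ | ‖z‖ < 1} = Metric.ball (0:ℂ) 1 := by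
    ext z; simp [Metric.mem_ball, dist_zero_right]
  rw [hUb] at hf
  set Q : ℂ → ℂ := dslope f 0 with hQ
  have hQdiff : DifferentiableOn ℂ Q (Metric.ball 0 1) :=
    (differentiableOn_dslope (Metric.ball_mem_nhds 0 one_pos)).mpr hf
  have hQ0 : Q 0 = 1 := by rw [hQ, dslope_same, hf'0]
  have hQz : ∀ z : ℂ, z ≠ 0 → Q z = f z / z := by
    intro z hz
    rw [hQ, dslope_of_ne f hz, slope_def_field, hf0, sub_zero, sub_zero]
  have hQne : ∀ z : ℂ, ‖z‖ < 1 → Q z ≠ 0 := by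
    intro z hz
    rcases eq_or_ne z 0 with rfl | hz0
    · rw [hQ0]; exact one_ne_zero
    · rw [hQz z hz0]; exact div_ne_zero (hfz z hz hz0) hz0
  have hf'diff : DifferentiableOn ℂ (deriv f) (Metric.ball 0 1) :=
    ((hf.analyticOnNhd Metric.isOpen_ball).deriv).differentiableOn
  set P : ℂ → ℂ := fun z => deriv f z / Q z with hP
  have hPdiff : DifferentiableOn ℂ P (Metric.ball 0 1) := by
    intro z hz
    exact ((hf'diff z hz).div (hQdiff z hz) (hQne z (mem_ball_zero_iff.mp hz)))
  have hPz : ∀ z : ℂ, ‖z‖ < 1 → z ≠ 0 → P z = z * deriv f z / f z := by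
    intro z hz hz0
    have : P z = deriv f z / Q z := rfl
    rw [this, hQz z hz0]
    field_simp [hfz z hz hz0]
  have hP0 : P 0 = 1 := by
    have : P 0 = deriv f 0 / Q 0 := rfl
    rw [this, hQ0, hf'0, div_one]
  have hPne : ∀ z : ℂ, ‖z‖ < 1 → P z ≠ 0 := fun z hz => div_ne_zero (hf' z hz) (hQne z hz)
  -- MAIN CLAIM
  have key : ∀ z : ℂ, ‖z‖ < 1 → ‖P z - 2/3‖ < 2/3 := by
    by_contra hcon
    push_neg at hcon
    obtain ⟨z₁, hz₁, hz₁'⟩ := hcon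
    set s : Set ℝ := {ρ : ℝ | 0 ≤ ρ ∧ ρ < 1 ∧ ∀ z : ℂ, ‖z‖ ≤ ρ → ‖P z - 2/3‖ < 2/3} with hs
    have hP13 : ‖P 0 - 2/3‖ < 2/3 := by
      rw [hP0, show (1:ℂ) - 2/3 = ((1/3:ℝ):ℂ) by push_cast; ring, Complex.norm_real,
        Real.norm_eq_abs, _root_.abs_of_nonneg (by norm_num : (0:ℝ) ≤ 1/3)]
      norm_num
    have h0s : (0:ℝ) ∈ s := by
      refine ⟨le_refl 0, by norm_num, ?_⟩
      intro z hz
      have hz' : z = 0 := norm_le_zero_iff.mp hz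
      rw [hz']; exact hP13
    have hsne : s.Nonempty := ⟨0, h0s⟩
    have hbdd : BddAbove s := ⟨1, fun ρ hρ => hρ.2.1.le⟩
    set r : ℝ := sSup s with hr
    have hr0' : 0 ≤ r := le_csSup hbdd h0s
    have hrz₁ : r ≤ ‖z₁‖ := by
      apply csSup_le hsne
      intro ρ hρ
      by_contra hρz
      push_neg at hρz
      exact absurd (hρ.2.2 z₁ hρz.le) (not_lt.mpr hz₁')
    have hr1 : r < 1 := lt_of_le_of_lt hrz₁ hz₁
    have hPcont0 : ContinuousAt P 0 :=
      hPdiff.continuousOn.continuousAt (Metric.ball_mem_nhds 0 one_pos)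
    have hev : ∀ᶠ z in nhds (0:ℂ), ‖P z - 2/3‖ < 2/3 := by
      have ht : Tendsto (fun z => ‖P z - 2/3‖) (nhds 0) (nhds ‖P 0 - 2/3‖) :=
        (hPcont0.sub continuousAt_const).norm
      exact ht.eventually_lt_const hP13
    obtain ⟨ε, hε0, hε⟩ := Metric.eventually_nhds_iff.mp hev
    have hδs : min (ε/2) (1/2) ∈ s := by
      refine ⟨by positivity, lt_of_le_of_lt (min_le_right _ _) (by norm_num), ?_⟩
      intro z hz
      apply hε
      rw [dist_zero_right]
      calc ‖z‖ ≤ min (ε/2) (1/2) := hz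
        _ < ε := lt_of_le_of_lt (min_le_left _ _) (by linarith)
    have hr0 : 0 < r := lt_of_lt_of_le (by positivity) (le_csSup hbdd hδs)
    have hrA : ∀ z : ℂ, ‖z‖ < r → ‖P z - 2/3‖ < 2/3 := by
      intro z hz
      obtain ⟨ρ, hρs, hρ⟩ := exists_lt_of_lt_csSup hsne hz
      exact hρs.2.2 z hρ.le
    have hrB : ∀ z : ℂ, ‖z‖ ≤ r → ‖P z - 2/3‖ ≤ 2/3 := by
      intro z hz
      rcases lt_or_eq_of_le hz with h | h
      · exact (hrA z h).le
      · have hzU : ‖z‖ < 1 := by rw [h]; exact hr1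
        have hPzc : ContinuousAt P z := hPdiff.continuousOn.continuousAt
          (Metric.isOpen_ball.mem_nhds (mem_ball_zero_iff.mpr hzU))
        have htt : Tendsto (fun t : ℝ => ‖P ((t:ℂ) * z) - 2/3‖) (nhdsWithin 1 (Iio 1))
            (nhds ‖P z - 2/3‖) := by
          have h1 : Tendsto (fun t : ℝ => (t:ℂ) * z) (nhds 1) (nhds z) := by
            have hcz : Continuous (fun t : ℝ => (t:ℂ) * z) :=
              Complex.continuous_ofReal.mul continuous_const
            have := hcz.tendsto (1:ℝ)
            simpa using this
          have h2 : Tendsto (fun t : ℝ => (t:ℂ) * z) (nhdsWithin 1 (Iio 1)) (nhds z) :=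
            h1.mono_left nhdsWithin_le_nhds
          exact ((hPzc.tendsto.comp h2).sub tendsto_const_nhds).norm
        refine le_of_tendsto htt ?_
        filter_upwards [Ioo_mem_nhdsLT_of_mem
          (⟨zero_lt_one, le_refl (1:ℝ)⟩ : (1:ℝ) ∈ Ioc (0:ℝ) 1)] with t ht
        have hmem : ‖(t:ℂ) * z‖ < r := by
          rw [norm_mul, Complex.norm_real, Real.norm_eq_abs, _root_.abs_of_nonneg ht.1.le, h]
          calc t * r < 1 * r := mul_lt_mul_of_pos_right ht.2 hr0
            _ = r := one_mul r
        exact (hrA _ hmem).le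
    have hz₀ex : ∃ z₀ : ℂ, ‖z₀‖ = r ∧ ‖P z₀ - 2/3‖ = 2/3 := by
      by_contra hno
      push_neg at hno
      have hstrict : ∀ z : ℂ, ‖z‖ ≤ r → ‖P z - 2/3‖ < 2/3 := by
        intro z hz
        rcases lt_or_eq_of_le hz with h | h
        · exact hrA z h
        · exact lt_of_le_of_ne (hrB z hz) (hno z h)
      have hO : IsOpen (Metric.ball (0:ℂ) 1 ∩ (fun z => ‖P z - 2/3‖) ⁻¹' Iio (2/3)) :=
        ContinuousOn.isOpen_inter_preimage
          ((hPdiff.continuousOn.sub continuousOn_const).norm) Metric.isOpen_ball isOpen_Iio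
      have hsub : Metric.closedBall (0:ℂ) r ⊆
          (Metric.ball (0:ℂ) 1 ∩ (fun z => ‖P z - 2/3‖) ⁻¹' Iio (2/3)) := by
        intro z hz
        rw [Metric.mem_closedBall, dist_zero_right] at hz
        exact ⟨mem_ball_zero_iff.mpr (lt_of_le_of_lt hz hr1), hstrict z hz⟩
      obtain ⟨ρ, hρr, hρ1, hρ⟩ := grow hO hr0' hr1 hsub
      have hρs : ρ ∈ s := ⟨by linarith, hρ1, fun z hz => (hρ z hz).2⟩
      have : ρ ≤ r := le_csSup hbdd hρs
      linarith
    obtain ⟨z₀, hz₀r, hz₀eq⟩ := hz₀ex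
    have hz₀U : ‖z₀‖ < 1 := by rw [hz₀r]; exact hr1
    have hz₀0 : z₀ ≠ 0 := by
      intro h
      rw [h, norm_zero] at hz₀r
      exact absurd hz₀r.symm (ne_of_gt hr0)
    have hP2' : ∀ z : ℂ, ‖z‖ ≤ r → P z ≠ 2 := fun z hz => ne_two_of_le _ (hrB z hz)
    have hO₂ : IsOpen (Metric.ball (0:ℂ) 1 ∩ P ⁻¹' {(2:ℂ)}ᶜ) :=
      ContinuousOn.isOpen_inter_preimage hPdiff.continuousOn Metric.isOpen_ball
        isOpen_compl_singleton
    have hsub₂ : Metric.closedBall (0:ℂ) r ⊆ (Metric.ball (0:ℂ) 1 ∩ P ⁻¹' {(2:ℂ)}ᶜ) := by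
      intro z hz
      rw [Metric.mem_closedBall, dist_zero_right] at hz
      exact ⟨mem_ball_zero_iff.mpr (lt_of_le_of_lt hz hr1), hP2' z hz⟩
    obtain ⟨r', hrr', hr'1, hr'⟩ := grow hO₂ hr0.le hr1 hsub₂
    set w : ℂ → ℂ := fun z => 2*(1 - P z)/(2 - P z) with hw
    have hwval : ∀ z : ℂ, w z = 2*(1 - P z)/(2 - P z) := fun z => rfl
    have hwdiff : DifferentiableOn ℂ w (Metric.ball 0 r') := by
      intro z hz
      have hzr' : ‖z‖ < r' := mem_ball_zero_iff.mp hz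
      have hz1 : ‖z‖ < 1 := lt_trans hzr' hr'1
      have h2 : (2:ℂ) - P z ≠ 0 := sub_ne_zero.mpr (Ne.symm ((hr' z hzr'.le).2))
      have hPd : DifferentiableWithinAt ℂ P (Metric.ball 0 r') z :=
        (hPdiff z (mem_ball_zero_iff.mpr hz1)).mono (Metric.ball_subset_ball hr'1.le)
      exact (((differentiableWithinAt_const _).sub hPd).const_mul 2).div
        ((differentiableWithinAt_const _).sub hPd) h2
    have hw0 : w 0 = 0 := by rw [hwval 0, hP0]; simp
    have hwz₀dAt : DifferentiableAt ℂ w z₀ :=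
      hwdiff.differentiableAt (Metric.isOpen_ball.mem_nhds
        (mem_ball_zero_iff.mpr (by rw [hz₀r]; exact hrr')))
    have hmaps : MapsTo w (Metric.ball 0 r) (Metric.ball (w 0) 1) := by
      intro z hz
      rw [hw0, mem_ball_zero_iff]
      rw [hwval z]
      exact wnorm_lt _ (hrA z (mem_ball_zero_iff.mp hz))
    have hwr : DifferentiableOn ℂ w (Metric.ball 0 r) :=
      hwdiff.mono (Metric.ball_subset_ball hrr'.le)
    have hschwarz : ∀ t : ℝ, 0 < t → t < 1 → ‖w ((t:ℂ) * z₀)‖ ≤ t := by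
      intro t ht0 ht1
      have hnorm : ‖(t:ℂ) * z₀‖ = t * r := by
        rw [norm_mul, Complex.norm_real, Real.norm_eq_abs, _root_.abs_of_pos ht0, hz₀r]
      have hmem : (t:ℂ) * z₀ ∈ Metric.ball (0:ℂ) r := by
        rw [mem_ball_zero_iff, hnorm]
        calc t * r < 1 * r := mul_lt_mul_of_pos_right ht1 hr0
          _ = r := one_mul r
      have hd := Complex.dist_le_div_mul_dist_of_mapsTo_ball hwr
        (hmaps.mono_right Metric.ball_subset_closedBall) hmem
      rw [hw0, dist_zero_right, dist_zero_right, hnorm] at hd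
      calc ‖w ((t:ℂ)*z₀)‖ ≤ 1/r * (t * r) := hd
        _ = t := by field_simp
    set W : ℂ := deriv w z₀ with hW
    have hwHD : HasDerivAt w W z₀ := hwz₀dAt.hasDerivAt
    have hc1 : HasDerivAt (fun t : ℝ => (t:ℂ) * z₀) z₀ 1 := by
      simpa using (Complex.ofRealCLM.hasDerivAt (x := (1:ℝ))).mul_const z₀
    have hu : HasDerivAt (fun t : ℝ => w ((t:ℂ) * z₀)) (z₀ * W) 1 := by
      have h3 := HasDerivAt.scomp_of_eq (x := (1:ℝ)) hwHD hc1 (by simp)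
      have h4 : z₀ • W = z₀ * W := rfl
      rw [h4] at h3
      exact h3
    have hφ := hasDerivAt_normSq_comp hu
    simp only [Complex.ofReal_one, one_mul] at hφ
    have hwz₀n : ‖w z₀‖ = 1 := by rw [hwval z₀]; exact wnorm_eq _ hz₀eq
    have hnsq1 : Complex.normSq (w z₀) = 1 := by rw [normSq_norm, hwz₀n]; norm_num
    set a : ℂ := w z₀ with ha
    set m : ℂ := z₀ * W with hm
    have hgeq : (1:ℝ) ≤ a.re*m.re + a.im*m.im := by
      have hts : Tendsto (slope (fun t : ℝ => Complex.normSq (w ((t:ℂ)*z₀))) 1)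
          (nhdsWithin 1 {(1:ℝ)}ᶜ) (nhds (2*(a.re*m.re + a.im*m.im))) :=
        hasDerivAt_iff_tendsto_slope.mp hφ
      have hts' := hts.mono_left
        (nhdsWithin_mono 1 (fun x hx => ne_of_lt hx : Iio (1:ℝ) ⊆ {(1:ℝ)}ᶜ))
      have htid : Tendsto (fun t : ℝ => t + 1) (nhdsWithin 1 (Iio 1)) (nhds 2) := by
        have h5 : Tendsto (fun t : ℝ => t + 1) (nhds (1:ℝ)) (nhds 2) := by
          have hc : Continuous (fun t : ℝ => t + 1) := continuous_id.add continuous_const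
          have := hc.tendsto (1:ℝ)
          norm_num at this
          exact this
        exact h5.mono_left nhdsWithin_le_nhds
      have hle : ∀ᶠ t in nhdsWithin (1:ℝ) (Iio 1), t + 1 ≤
          slope (fun t : ℝ => Complex.normSq (w ((t:ℂ)*z₀))) 1 t := by
        filter_upwards [Ioo_mem_nhdsLT_of_mem
          (⟨zero_lt_one, le_refl (1:ℝ)⟩ : (1:ℝ) ∈ Ioc (0:ℝ) 1)] with t ht
        obtain ⟨ht0, ht1⟩ := ht
        have hφt : Complex.normSq (w ((t:ℂ)*z₀)) ≤ t^2 := by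
          have hsw := hschwarz t ht0 ht1
          rw [normSq_norm]
          nlinarith [norm_nonneg (w ((t:ℂ)*z₀))]
        have hφ1 : Complex.normSq (w (((1:ℝ):ℂ)*z₀)) = 1 := by
          rw [Complex.ofReal_one, one_mul]; exact hnsq1
        rw [slope_def_field, hφ1]
        rw [le_div_iff_of_neg (by linarith : t - 1 < 0)]
        nlinarith [hφt]
      have h2le := le_of_tendsto_of_tendsto htid hts' hle
      linarith
    have hc2 : HasDerivAt (fun θ : ℝ => z₀ * Complex.exp ((θ:ℂ) * Complex.I))
        (z₀ * Complex.I) 0 := by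
      have h1 : HasDerivAt (fun θ : ℝ => (θ:ℂ) * Complex.I) Complex.I 0 := by
        simpa using (Complex.ofRealCLM.hasDerivAt (x := (0:ℝ))).mul_const Complex.I
      have h3 := HasDerivAt.scomp_of_eq (x := (0:ℝ))
        (Complex.hasDerivAt_exp (((0:ℝ):ℂ) * Complex.I)) h1 rfl
      have h4 : HasDerivAt (fun θ : ℝ => Complex.exp ((θ:ℂ)*Complex.I)) Complex.I 0 := by
        have h6 : Complex.I • Complex.exp (((0:ℝ):ℂ) * Complex.I) = Complex.I := by simp
        rw [h6] at h3
        exact h3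
      exact h4.const_mul z₀
    have hv : HasDerivAt (fun θ : ℝ => w (z₀ * Complex.exp ((θ:ℂ) * Complex.I)))
        (m * Complex.I) 0 := by
      have h3 := HasDerivAt.scomp_of_eq (x := (0:ℝ)) hwHD hc2 (by simp)
      have e : m * Complex.I = (z₀ * Complex.I) • W := by
        rw [hm, hW]
        simp only [smul_eq_mul]
        ring
      rw [e]
      exact h3
    have hψ := hasDerivAt_normSq_comp hv
    have hcval : z₀ * Complex.exp (((0:ℝ):ℂ) * Complex.I) = z₀ := by simp
    rw [hcval] at hψ
    have hψmax : IsLocalMax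
        (fun θ : ℝ => Complex.normSq (w (z₀ * Complex.exp ((θ:ℂ) * Complex.I)))) 0 := by
      apply Filter.Eventually.of_forall
      intro θ
      have hcirc : ‖z₀ * Complex.exp ((θ:ℂ)*Complex.I)‖ = r := by
        rw [norm_mul, Complex.norm_exp_ofReal_mul_I,
          mul_one, hz₀r]
      have hb : ‖w (z₀ * Complex.exp ((θ:ℂ)*Complex.I))‖ ≤ 1 := by
        rw [hwval _]
        exact wnorm_le _ (hrB _ (le_of_eq hcirc))
      simp only [hcval]
      rw [normSq_norm, normSq_norm, hwz₀n]
      nlinarith [norm_nonneg (w (z₀ * Complex.exp ((θ:ℂ)*Complex.I)))]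
    have hderiv0 := hψmax.deriv_eq_zero
    have hψval : 2*(a.re*(m*Complex.I).re + a.im*(m*Complex.I).im) = 0 := by
      rw [← hψ.deriv]
      exact hderiv0
    have hIm0 : a.re * m.im - a.im * m.re = 0 := by
      have h6 : (m*Complex.I).re = -m.im := by simp [Complex.mul_re]
      have h7 : (m*Complex.I).im = m.re := by simp [Complex.mul_im]
      rw [h6, h7] at hψval
      linarith
    set k : ℝ := a.re*m.re + a.im*m.im with hk
    have hkc : (starRingEnd ℂ) a * m = (k:ℂ) := by
      apply Complex.ext
      · simp only [Complex.mul_re, Complex.conj_re, Complex.conj_im, Complex.ofReal_re, hk]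
        ring
      · simp only [Complex.mul_im, Complex.conj_re, Complex.conj_im, Complex.ofReal_im, hk]
        linarith
    have hmka : m = (k:ℂ) * a := by
      calc m = (a * (starRingEnd ℂ) a) * m := by
              rw [Complex.mul_conj, hnsq1]
              simp
        _ = a * ((starRingEnd ℂ) a * m) := by ring
        _ = a * (k:ℂ) := by rw [hkc]
        _ = (k:ℂ) * a := by ring
    -- derivative of w in terms of deriv P
    have hPd0 : HasDerivAt P (deriv P z₀) z₀ :=
      (hPdiff.differentiableAt (Metric.isOpen_ball.mem_nhds
        (mem_ball_zero_iff.mpr hz₀U))).hasDerivAt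
    set A : ℂ := P z₀ with hA
    set Bc : ℂ := deriv P z₀ with hB
    have h2A : (2:ℂ) - A ≠ 0 := sub_ne_zero.mpr (Ne.symm (hP2' z₀ hz₀r.le))
    have hwform : HasDerivAt w ((2*(0 - Bc)*(2 - A) - 2*(1 - A)*(0 - Bc))/(2 - A)^2) z₀ := by
      have hnum : HasDerivAt (fun z => 2*(1 - P z)) (2*(0 - Bc)) z₀ :=
        ((hasDerivAt_const z₀ (1:ℂ)).sub hPd0).const_mul 2
      have hden : HasDerivAt (fun z => 2 - P z) (0 - Bc) z₀ :=
        (hasDerivAt_const z₀ (2:ℂ)).sub hPd0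
      exact hnum.div hden h2A
    have hWval : W = -2*Bc/(2 - A)^2 := by
      rw [hW, hwform.deriv]
      congr 1
      ring
    have hzB : z₀ * Bc = -(k:ℂ)*(1 - A)*(2 - A) := by
      have hrel : z₀ * W = (k:ℂ) * (2*(1 - A)/(2 - A)) := by
        rw [← hm, hmka, ha, hwval z₀, ← hA]
      rw [hWval] at hrel
      exact solve_rel z₀ A Bc k h2A hrel
    -- identity  P + z P'/P = 1 + z f''/f'
    have hfz₀ : f z₀ ≠ 0 := hfz z₀ hz₀U hz₀0
    have hf'z₀ : deriv f z₀ ≠ 0 := hf' z₀ hz₀U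
    have hAne0 : A ≠ 0 := hPne z₀ hz₀U
    have hAval : A = z₀ * deriv f z₀ / f z₀ := hPz z₀ hz₀U hz₀0
    have hevPg : P =ᶠ[nhds z₀] (fun z => z * deriv f z / f z) := by
      have hOz : IsOpen (Metric.ball (0:ℂ) 1 \ {0}) :=
        Metric.isOpen_ball.sdiff isClosed_singleton
      have hmem : z₀ ∈ Metric.ball (0:ℂ) 1 \ {0} := ⟨mem_ball_zero_iff.mpr hz₀U, hz₀0⟩
      filter_upwards [hOz.mem_nhds hmem] with z hz
      exact hPz z (mem_ball_zero_iff.mp hz.1) hz.2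
    have hd2 : DifferentiableAt ℂ (deriv f) z₀ :=
      hf'diff.differentiableAt (Metric.isOpen_ball.mem_nhds (mem_ball_zero_iff.mpr hz₀U))
    have hdf : DifferentiableAt ℂ f z₀ :=
      hf.differentiableAt (Metric.isOpen_ball.mem_nhds (mem_ball_zero_iff.mpr hz₀U))
    have hgd : HasDerivAt (fun z => z * deriv f z / f z)
        (((1 * deriv f z₀ + z₀ * deriv (deriv f) z₀) * f z₀ -
          z₀ * deriv f z₀ * deriv f z₀) / f z₀^2) z₀ :=
      ((hasDerivAt_id z₀).mul hd2.hasDerivAt).div hdf.hasDerivAt hfz₀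
    have hBval : Bc = ((1 * deriv f z₀ + z₀ * deriv (deriv f) z₀) * f z₀ -
        z₀ * deriv f z₀ * deriv f z₀) / f z₀^2 := by
      rw [hB, hevPg.deriv_eq, hgd.deriv]
    have hid : A + z₀ * Bc / A = 1 + z₀ * deriv (deriv f) z₀ / deriv f z₀ := by
      rw [hBval, hAval]
      exact id_aux z₀ (deriv f z₀) (deriv (deriv f) z₀) (f z₀) hz₀0 hf'z₀ hfz₀
    have hkge1 : (1:ℝ) ≤ k := hgeq
    have hnsqA : Complex.normSq (A - 2/3) = 4/9 := by
      rw [normSq_norm, hz₀eq]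
      norm_num
    have hfin := final_ineq A k hkge1 hAne0 hnsqA
    have hrw : A - (k:ℂ)*(1-A)*(2-A)/A = A + z₀*Bc/A := by
      rw [hzB]
      ring
    rw [hrw, hid] at hfin
    exact absurd (hre z₀ hz₀U) (not_lt.mpr hfin)
  -- ASSEMBLY
  have hite : ∀ z : ℂ, ‖z‖ < 1 →
      (if z = 0 then (1 : ℂ) else z * deriv f z / f z) = P z := by
    intro z hz
    split_ifs with h
    · rw [h, hP0]
    · exact (hPz z hz h).symm
  constructor
  · refine ⟨fun z => 2*(1 - P z)/(2 - P z), ?_, ?_, ?_, ?_⟩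
    · rw [hUb]
      intro z hz
      have hz1 : ‖z‖ < 1 := mem_ball_zero_iff.mp hz
      have h2 : (2:ℂ) - P z ≠ 0 :=
        sub_ne_zero.mpr (Ne.symm (ne_two_of_le _ (key z hz1).le))
      exact (((differentiableWithinAt_const _).sub (hPdiff z hz)).const_mul 2).div
        ((differentiableWithinAt_const _).sub (hPdiff z hz)) h2
    · show 2*(1 - P 0)/(2 - P 0) = 0
      rw [hP0]; norm_num
    · intro z hz
      exact wnorm_lt _ (key z hz)
    · intro z hz
      rw [hite z hz]
      exact wform_aux (P z) (ne_two_of_le _ (key z hz).le)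
  · intro z hz
    rw [hite z hz]
    exact key z hz
end
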